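/- Let U' ⊂ U = V⊗V⊗V be as in the SL₂×SL₂×SL₂ setting (U' spanned by the weight vectors of weights (-1,-1,-1), (1,-1,-1), (-1,1,-1), (-1,-1,1)). Then ∧²U' admits a filtration by B-submodules 0 ⊂ F₁ ⊂ F₃ ⊂ F₅ ⊂ ∧²U' with successive quotients isomorphic as B-modules to: the 1-dimensional weight (-2,-2,0); a 2-dimensional module with weights (-2,0,-2), (-2,0,0); a 2-dimensional module with weights (0,-2,-2), (0,-2,0); and the 1-dimensional weight (0,0,-2). -/

import Mathlib

/-!
STATEMENT 17: With G = SL₂×SL₂×SL₂, B the (lower-triangular) Borel, U = ℂ²⊗ℂ²⊗ℂ² the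
triple tensor of standard representations, and U' ⊂ U the 4-dimensional B-stable
subspace spanned by the weight vectors of weights (-1,-1,-1), (1,-1,-1), (-1,1,-1),
(-1,-1,1), the exterior square ∧²U' admits a filtration by B-submodules
0 ⊂ F₁ ⊂ F₃ ⊂ F₅ ⊂ ∧²U' with successive quotients of dimensions 1, 2, 2, 1 and
weights: (-2,-2,0); then (-2,0,-2), (-2,0,0); then (0,-2,-2), (0,-2,0); then (0,0,-2).

We realize ∧²U' as the span of the alternating tensors x⊗y - y⊗x (x, y ∈ U') inside
U ⊗ U.  B-stability is expressed by stability under the action of the maximal torus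
(the operators `torusOp`, which exhibit the listed vectors as weight vectors of the
listed weights) and under the three simple lowering operators of the Lie algebra of B
(the derivations `lowerOp`); the weight content of each filtration step is recorded
by the explicit weight-vector generators and their torus eigenvalue equations.
-/

open scoped TensorProduct

noncomputable section

abbrev V2 : Type := Fin 2 → ℂ
abbrev TU : Type := V2 ⊗[ℂ] (V2 ⊗[ℂ] V2)

noncomputable instance : AddCommGroup (TU ⊗[ℂ] TU) := by
  exact @TensorProduct.addCommGroup ℂ _ TU TU _ _ _ _

/-- Standard basis vectors of ℂ²; `ev 0` has weight +1 and `ev 1` weight -1. -/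
def ev (i : Fin 2) : V2 := Pi.single i 1

/-- The basis tensors of U. -/
def u (a b c : Fin 2) : TU := ev a ⊗ₜ[ℂ] (ev b ⊗ₜ[ℂ] ev c)

/-- The lowering operator of 𝔰𝔩₂ (for the lower triangular Borel): e₀ ↦ e₁, e₁ ↦ 0. -/
def low : V2 →ₗ[ℂ] V2 := Matrix.toLin' !![(0 : ℂ), 0; 1, 0]

/-- The torus element diag(t, t⁻¹) acting on ℂ². -/
def tor (t : ℂˣ) : V2 →ₗ[ℂ] V2 := Matrix.toLin' (Matrix.diagonal ![(t : ℂ), ((t⁻¹ : ℂˣ) : ℂ)])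

/-- A linear operator on one of the three factors of U. -/
def onFactor (i : Fin 3) (f : V2 →ₗ[ℂ] V2) : TU →ₗ[ℂ] TU :=
  match i with
  | 0 => TensorProduct.map f LinearMap.id
  | 1 => TensorProduct.map LinearMap.id (TensorProduct.map f LinearMap.id)
  | 2 => TensorProduct.map LinearMap.id (TensorProduct.map LinearMap.id f)

/-- The i-th simple lowering operator of Lie(B), acting on U ⊗ U as a derivation. -/
def lowerOp (i : Fin 3) : (TU ⊗[ℂ] TU) →ₗ[ℂ] (TU ⊗[ℂ] TU) :=
  TensorProduct.map (onFactor i low) LinearMap.id +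
    TensorProduct.map LinearMap.id (onFactor i low)

/-- The i-th torus coordinate acting on U ⊗ U (multiplicatively). -/
def torusOp (i : Fin 3) (t : ℂˣ) : (TU ⊗[ℂ] TU) →ₗ[ℂ] (TU ⊗[ℂ] TU) :=
  TensorProduct.map (onFactor i (tor t)) (onFactor i (tor t))

/-- Alternating tensor x∧y, realized inside U ⊗ U. -/
def wedge (x y : TU) : TU ⊗[ℂ] TU := x ⊗ₜ[ℂ] y - y ⊗ₜ[ℂ] x

/-- U' : the span of the four lowest weight vectors of U. -/
def U' : Submodule ℂ TU :=
  Submodule.span ℂ {u 1 1 1, u 0 1 1, u 1 0 1, u 1 1 0}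

/-- ∧²U', realized as the span of alternating tensors of elements of U'. -/
def Lam2U' : Submodule ℂ (TU ⊗[ℂ] TU) :=
  Submodule.span ℂ {z | ∃ x ∈ U', ∃ y ∈ U', z = wedge x y}

-- The six weight vectors of ∧²U':
def v220 : TU ⊗[ℂ] TU := wedge (u 1 1 1) (u 1 1 0)  -- weight (-2,-2,0)
def v202 : TU ⊗[ℂ] TU := wedge (u 1 1 1) (u 1 0 1)  -- weight (-2,0,-2)
def v200 : TU ⊗[ℂ] TU := wedge (u 1 0 1) (u 1 1 0)  -- weight (-2,0,0)
def v022 : TU ⊗[ℂ] TU := wedge (u 0 1 1) (u 1 1 1)  -- weight (0,-2,-2)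
def v020 : TU ⊗[ℂ] TU := wedge (u 0 1 1) (u 1 1 0)  -- weight (0,-2,0)
def v002 : TU ⊗[ℂ] TU := wedge (u 0 1 1) (u 1 0 1)  -- weight (0,0,-2)

/-- The filtration steps, given by spans of the listed weight vectors. -/
def F1 : Submodule ℂ (TU ⊗[ℂ] TU) := Submodule.span ℂ {v220}
def F3 : Submodule ℂ (TU ⊗[ℂ] TU) := Submodule.span ℂ {v220, v202, v200}
def F5 : Submodule ℂ (TU ⊗[ℂ] TU) := Submodule.span ℂ {v220, v202, v200, v022, v020}

/-!
The basis tensors `u a b c` of `U` are torus eigenvectors, of weight `(±1, ±1, ±1)`, so every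
wedge of two of them is a weight vector of `U ⊗ U`, and any span of such wedges is torus-stable.
Ordering the six weight vectors of `∧²U'` as `v220, v202, v200, v022, v020, v002`, each simple
lowering operator sends every one of them to `0` or to `±` an earlier one. Hence the span of each
initial segment of this list is a `B`-submodule, and `F₁, F₃, F₅, ∧²U'` are the segments of
lengths `1, 3, 5, 6`. These lengths are the dimensions because the six vectors `x ⊗ y - y ⊗ x`
have disjoint supports in the tensor basis of `U ⊗ U`.
-/

theorem Submodule.map_span_le_of_forall_eq_smul {R M : Type*} [Semiring R] [AddCommMonoid M]
    [Module R M] {f : M →ₗ[R] M} {s : Set M} (h : ∀ v ∈ s, ∃ c : R, f v = c • v) :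
    (span R s).map f ≤ span R s := by
  rw [map_span_le]
  intro v hv
  obtain ⟨c, hc⟩ := h v hv
  rw [hc]
  exact smul_mem _ c (subset_span hv)

theorem Submodule.map_span_image_Iic_le {R M ι : Type*} [Semiring R] [AddCommMonoid M]
    [Module R M] [Preorder ι] {f : M →ₗ[R] M} {v : ι → M}
    (hf : ∀ j, f (v j) ∈ span R (v '' Set.Iio j)) (k : ι) :
    (span R (v '' Set.Iic k)).map f ≤ span R (v '' Set.Iic k) := by
  rw [map_span_le]
  rintro _ ⟨j, hjk, rfl⟩
  exact span_mono (Set.image_mono fun l hl => (le_of_lt hl).trans hjk) (hf j)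

theorem finrank_span_image_Iic {R M : Type*} [Semiring R] [Nontrivial R] [StrongRankCondition R]
    [AddCommMonoid M] [Module R M] {n : ℕ} {v : Fin n → M} (hv : LinearIndependent R v)
    (k : Fin n) : Module.finrank R (Submodule.span R (v '' Set.Iic k)) = k + 1 := by
  rw [Set.image_eq_range]
  exact (finrank_span_eq_card (hv.comp _ Subtype.val_injective)).trans
    (by rw [← Set.toFinset_card, Set.toFinset_Iic, Fin.card_Iic])

theorem Module.Basis.linearIndependent_sub {R M ι κ : Type*} [Ring R] [AddCommGroup M]
    [Module R M] (b : Basis κ R M) {x y : ι → κ} (hx : Function.Injective x)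
    (hxy : ∀ k l, x k ≠ y l) : LinearIndependent R fun k => b (x k) - b (y k) := by
  classical
  refine LinearIndependent.of_comp (LinearMap.pi fun k => b.coord (x k)) ?_
  have hcoord : (LinearMap.pi fun k => b.coord (x k)) ∘ (fun k => b (x k) - b (y k)) =
      fun k => Pi.single k 1 := by
    ext k l
    simp [Finsupp.single_apply, hx.eq_iff, hxy, Pi.single_apply, eq_comm]
  rw [hcoord]
  exact Pi.linearIndependent_single_one ι R

def evWeight : Fin 2 → ℤ := ![1, -1]

lemma tor_ev (t : ℂˣ) (a : Fin 2) : tor t (ev a) = (t : ℂ) ^ evWeight a • ev a := by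
  ext j
  fin_cases a <;> fin_cases j <;>
    simp [tor, ev, evWeight, Matrix.toLin'_apply, Matrix.mulVec, dotProduct, Matrix.diagonal]

lemma low_ev (a : Fin 2) : low (ev a) = if a = 0 then ev 1 else 0 := by
  ext j
  fin_cases a <;> fin_cases j <;> simp [low, ev, Matrix.toLin'_apply, Matrix.mulVec, dotProduct]

lemma onFactor_tor_u (i : Fin 3) (t : ℂˣ) (a b c : Fin 2) :
    onFactor i (tor t) (u a b c) = (t : ℂ) ^ evWeight (![a, b, c] i) • u a b c := by
  fin_cases i <;>
    simp [onFactor, u, tor_ev, ← TensorProduct.smul_tmul', TensorProduct.tmul_smul]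

@[simp] lemma onFactor_zero_low_u (a b c : Fin 2) :
    onFactor 0 low (u a b c) = if a = 0 then u 1 b c else 0 := by
  split_ifs <;> simp [onFactor, u, low_ev, *]

@[simp] lemma onFactor_one_low_u (a b c : Fin 2) :
    onFactor 1 low (u a b c) = if b = 0 then u a 1 c else 0 := by
  split_ifs <;> simp [onFactor, u, low_ev, *]

@[simp] lemma onFactor_two_low_u (a b c : Fin 2) :
    onFactor 2 low (u a b c) = if c = 0 then u a b 1 else 0 := by
  split_ifs <;> simp [onFactor, u, low_ev, *]

def wedgeₗ : TU →ₗ[ℂ] TU →ₗ[ℂ] TU ⊗[ℂ] TU :=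
  TensorProduct.mk ℂ TU TU - (TensorProduct.mk ℂ TU TU).flip

@[simp] lemma wedgeₗ_apply (x y : TU) : wedgeₗ x y = wedge x y := rfl

@[simp] lemma wedge_zero_left (y : TU) : wedge 0 y = 0 := by simp [wedge]

@[simp] lemma wedge_zero_right (x : TU) : wedge x 0 = 0 := by simp [wedge]

@[simp] lemma wedge_self (x : TU) : wedge x x = 0 := sub_self (x ⊗ₜ x)

lemma wedge_swap (x y : TU) : wedge y x = -wedge x y := (neg_sub _ _).symm

lemma torusOp_wedge (i : Fin 3) (t : ℂˣ) (x y : TU) :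
    torusOp i t (wedge x y) = wedge (onFactor i (tor t) x) (onFactor i (tor t) y) := by
  simp [torusOp, wedge]

lemma lowerOp_wedge (i : Fin 3) (x y : TU) :
    lowerOp i (wedge x y) = wedge (onFactor i low x) y + wedge x (onFactor i low y) := by
  simp only [lowerOp, wedge, LinearMap.add_apply, map_sub, TensorProduct.map_tmul,
    LinearMap.id_coe, id_eq]
  abel

lemma torusOp_wedge_u (i : Fin 3) (t : ℂˣ) (a b c a' b' c' : Fin 2) :
    torusOp i t (wedge (u a b c) (u a' b' c')) =
      (t : ℂ) ^ (evWeight (![a, b, c] i) + evWeight (![a', b', c'] i)) •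
        wedge (u a b c) (u a' b' c') := by
  rw [torusOp_wedge, onFactor_tor_u, onFactor_tor_u, ← wedgeₗ_apply, LinearMap.map_smul₂,
    map_smul, smul_smul, zpow_add₀ (Units.ne_zero t), wedgeₗ_apply]

lemma wedge_mem_span {s : Set (TU ⊗[ℂ] TU)} {x y : TU}
    (h : x = y ∨ wedge x y ∈ s ∨ wedge y x ∈ s) : wedge x y ∈ Submodule.span ℂ s := by
  rcases h with rfl | h | h
  · rw [wedge_self]
    exact zero_mem _
  · exact Submodule.subset_span h
  · rw [wedge_swap]
    exact neg_mem (Submodule.subset_span h)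

lemma lowerOp_v220 (i : Fin 3) : lowerOp i v220 = 0 := by
  fin_cases i <;> simp [v220, lowerOp_wedge]

lemma lowerOp_v202 (i : Fin 3) : lowerOp i v202 = 0 := by
  fin_cases i <;> simp [v202, lowerOp_wedge]

lemma lowerOp_v200 (i : Fin 3) : lowerOp i v200 = ![0, v220, -v202] i := by
  fin_cases i <;> simp [v200, v220, v202, lowerOp_wedge]
  exact wedge_swap _ _

lemma lowerOp_v022 (i : Fin 3) : lowerOp i v022 = 0 := by
  fin_cases i <;> simp [v022, lowerOp_wedge]

lemma lowerOp_v020 (i : Fin 3) : lowerOp i v020 = ![v220, 0, v022] i := by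
  fin_cases i <;> simp [v020, v220, v022, lowerOp_wedge]

lemma lowerOp_v002 (i : Fin 3) : lowerOp i v002 = ![v202, v022, 0] i := by
  fin_cases i <;> simp [v002, v202, v022, lowerOp_wedge]

def weightVector : Fin 6 → TU ⊗[ℂ] TU := ![v220, v202, v200, v022, v020, v002]

lemma lowerOp_weightVector_mem (i : Fin 3) (j : Fin 6) :
    lowerOp i (weightVector j) ∈ Submodule.span ℂ (weightVector '' Set.Iio j) := by
  fin_cases j <;> fin_cases i <;>
    simp [weightVector, lowerOp_v220, lowerOp_v202, lowerOp_v200, lowerOp_v022, lowerOp_v020,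
      lowerOp_v002] <;>
    exact Submodule.subset_span (by simp [Fin.exists_fin_succ])

lemma exists_torusOp_weightVector_eq_smul (i : Fin 3) (t : ℂˣ) (j : Fin 6) :
    ∃ c : ℂ, torusOp i t (weightVector j) = c • weightVector j := by
  fin_cases j <;> exact ⟨_, torusOp_wedge_u ..⟩

def basisTU : Module.Basis (Fin 2 × Fin 2 × Fin 2) ℂ TU :=
  (Pi.basisFun ℂ (Fin 2)).tensorProduct
    ((Pi.basisFun ℂ (Fin 2)).tensorProduct (Pi.basisFun ℂ (Fin 2)))

lemma wedge_u_eq_basis_sub (a b c a' b' c' : Fin 2) :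
    wedge (u a b c) (u a' b' c') = basisTU.tensorProduct basisTU ((a, b, c), (a', b', c')) -
      basisTU.tensorProduct basisTU ((a', b', c'), (a, b, c)) := by
  simp [wedge, basisTU, u, ev]

def weightVectorIndex : Fin 6 → (Fin 2 × Fin 2 × Fin 2) × (Fin 2 × Fin 2 × Fin 2) :=
  ![((1, 1, 1), (1, 1, 0)), ((1, 1, 1), (1, 0, 1)), ((1, 0, 1), (1, 1, 0)),
    ((0, 1, 1), (1, 1, 1)), ((0, 1, 1), (1, 1, 0)), ((0, 1, 1), (1, 0, 1))]

lemma linearIndependent_weightVector : LinearIndependent ℂ weightVector := by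
  have hw : weightVector = fun k => basisTU.tensorProduct basisTU (weightVectorIndex k) -
      basisTU.tensorProduct basisTU (weightVectorIndex k).swap := by
    ext k
    fin_cases k <;>
      simp [weightVector, weightVectorIndex, v220, v202, v200, v022, v020, v002,
        wedge_u_eq_basis_sub]
  rw [hw]
  exact (basisTU.tensorProduct basisTU).linearIndependent_sub (x := weightVectorIndex)
    (y := Prod.swap ∘ weightVectorIndex) (by decide) (by decide)

def weightFlag (k : Fin 6) : Submodule ℂ (TU ⊗[ℂ] TU) :=
  Submodule.span ℂ (weightVector '' Set.Iic k)

lemma weightFlag_mono : Monotone weightFlag := fun _ _ h =>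
  Submodule.span_mono (Set.image_mono (Set.Iic_subset_Iic.2 h))

lemma finrank_weightFlag (k : Fin 6) : Module.finrank ℂ (weightFlag k) = k + 1 :=
  finrank_span_image_Iic linearIndependent_weightVector k

def IsBStable (F : Submodule ℂ (TU ⊗[ℂ] TU)) : Prop :=
  (∀ i t, F.map (torusOp i t) ≤ F) ∧ ∀ i : Fin 3, F.map (lowerOp i) ≤ F

lemma isBStable_weightFlag (k : Fin 6) : IsBStable (weightFlag k) :=
  ⟨fun i t => Submodule.map_span_le_of_forall_eq_smul <| by
      rintro _ ⟨j, -, rfl⟩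
      exact exists_torusOp_weightVector_eq_smul i t j,
    fun i => Submodule.map_span_image_Iic_le (lowerOp_weightVector_mem i) k⟩

theorem span_wedge_span_eq (T : Set TU) :
    Submodule.span ℂ {z | ∃ x ∈ Submodule.span ℂ T, ∃ y ∈ Submodule.span ℂ T, z = wedge x y} =
      Submodule.span ℂ (Set.image2 wedge T T) := by
  apply le_antisymm
  · rw [Submodule.span_le]
    rintro _ ⟨x, hx, y, hy, rfl⟩
    simpa [Submodule.map₂_span_span] using Submodule.apply_mem_map₂ wedgeₗ hx hy
  · apply Submodule.span_mono
    rintro _ ⟨x, hx, y, hy, rfl⟩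
    exact ⟨x, Submodule.subset_span hx, y, Submodule.subset_span hy, rfl⟩

lemma lam2U'_eq_weightFlag : Lam2U' = weightFlag 5 := by
  rw [Lam2U', U', span_wedge_span_eq, weightFlag]
  apply le_antisymm
  · rw [Submodule.span_le]
    rintro _ ⟨x, hx, y, hy, rfl⟩
    simp only [Set.mem_insert_iff, Set.mem_singleton_iff] at hx hy
    rcases hx with rfl | rfl | rfl | rfl <;> rcases hy with rfl | rfl | rfl | rfl <;>
      apply wedge_mem_span <;>
      simp [weightVector, Fin.exists_fin_succ, v220, v202, v200, v022, v020, v002]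
  · rw [Submodule.span_le]
    rintro _ ⟨j, -, rfl⟩
    fin_cases j <;> exact Submodule.subset_span (Set.mem_image2_of_mem (by simp) (by simp))

lemma span_weightVectors_eq_weightFlag :
    Submodule.span ℂ {v220, v202, v200, v022, v020, v002} = weightFlag 5 := by
  rw [weightFlag]; congr 1; ext x; simp [weightVector, Fin.exists_fin_succ, eq_comm]

lemma F1_eq_weightFlag : F1 = weightFlag 0 := by
  rw [F1, weightFlag]; congr 1; ext x; simp [weightVector, eq_comm]

lemma F3_eq_weightFlag : F3 = weightFlag 2 := by
  rw [F3, weightFlag]; congr 1; ext x; simp [weightVector, Fin.exists_fin_succ, eq_comm]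

lemma F5_eq_weightFlag : F5 = weightFlag 4 := by
  rw [F5, weightFlag]; congr 1; ext x; simp [weightVector, Fin.exists_fin_succ, eq_comm]

theorem lam2_filtration :
    -- ∧²U' is spanned by the six listed weight vectors, and the listed generators
    -- are weight vectors of the listed weights:
    Lam2U' = Submodule.span ℂ {v220, v202, v200, v022, v020, v002} ∧
    (∀ t : ℂˣ, torusOp 0 t v220 = ((t : ℂ) ^ (-2 : ℤ)) • v220 ∧
      torusOp 1 t v220 = ((t : ℂ) ^ (-2 : ℤ)) • v220 ∧ torusOp 2 t v220 = v220) ∧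
    (∀ t : ℂˣ, torusOp 0 t v202 = ((t : ℂ) ^ (-2 : ℤ)) • v202 ∧
      torusOp 1 t v202 = v202 ∧ torusOp 2 t v202 = ((t : ℂ) ^ (-2 : ℤ)) • v202) ∧
    (∀ t : ℂˣ, torusOp 0 t v200 = ((t : ℂ) ^ (-2 : ℤ)) • v200 ∧
      torusOp 1 t v200 = v200 ∧ torusOp 2 t v200 = v200) ∧
    (∀ t : ℂˣ, torusOp 0 t v022 = v022 ∧
      torusOp 1 t v022 = ((t : ℂ) ^ (-2 : ℤ)) • v022 ∧
      torusOp 2 t v022 = ((t : ℂ) ^ (-2 : ℤ)) • v022) ∧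
    (∀ t : ℂˣ, torusOp 0 t v020 = v020 ∧
      torusOp 1 t v020 = ((t : ℂ) ^ (-2 : ℤ)) • v020 ∧ torusOp 2 t v020 = v020) ∧
    (∀ t : ℂˣ, torusOp 0 t v002 = v002 ∧ torusOp 1 t v002 = v002 ∧
      torusOp 2 t v002 = ((t : ℂ) ^ (-2 : ℤ)) • v002) ∧
    -- the filtration is an increasing chain inside ∧²U':
    F1 ≤ F3 ∧ F3 ≤ F5 ∧ F5 ≤ Lam2U' ∧
    -- each step is B-stable (stable under the torus and the lowering operators):
    (∀ F ∈ [F1, F3, F5, Lam2U'], (∀ i t, F.map (torusOp i t) ≤ F) ∧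
      (∀ i : Fin 3, F.map (lowerOp i) ≤ F)) ∧
    -- dimensions 1, 3, 5, 6, so the successive quotients have dimensions 1, 2, 2, 1:
    Module.finrank ℂ F1 = 1 ∧ Module.finrank ℂ F3 = 3 ∧
    Module.finrank ℂ F5 = 5 ∧ Module.finrank ℂ Lam2U' = 6 := by
  rw [F1_eq_weightFlag, F3_eq_weightFlag, F5_eq_weightFlag, lam2U'_eq_weightFlag]
  have hB : ∀ F ∈ [weightFlag 0, weightFlag 2, weightFlag 4, weightFlag 5], IsBStable F := by
    simp [isBStable_weightFlag]
  refine ⟨span_weightVectors_eq_weightFlag.symm, ?_, ?_, ?_, ?_, ?_, ?_,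
    weightFlag_mono (by decide), weightFlag_mono (by decide), weightFlag_mono (by decide), hB,
    finrank_weightFlag 0, finrank_weightFlag 2, finrank_weightFlag 4, finrank_weightFlag 5⟩
  all_goals
    intro t
    simp [v220, v202, v200, v022, v020, v002, torusOp_wedge_u, evWeight]
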